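/- Let u ∈ C̃²(T³) solve the reduced Calabi–Yau equation (u_xx + 1)(u_yy + u_tt + u_t + 1) − u_xy² − u_xt² = e^F with F continuous and 1-periodic. Then for every real number p ≥ 2: ∫_{[0,1]³} |u|^{p−2} |∇u|² dV ≤ (1/4) ‖u‖_{L^p}^p + (5p/4) · |1 + e^F|_{C⁰} · ‖u‖_{L^p}^{p−1}, where |∇u|² = u_x² + u_y² + u_t². (Equivalently, ‖∇(|u|^{p/2})‖_{L²}² ≤ (p²/16) ‖u‖_{L^p}^p + (5p³/16) |1+e^F|_{C⁰} ‖u‖_{L^p}^{p−1}.) -/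

import Mathlib

open MeasureTheory

noncomputable section

/-- Points of `ℝ³`, written as `ℝ × ℝ × ℝ`. -/
abbrev R3 := ℝ × ℝ × ℝ

/-- The coordinate direction `x`. -/
def vx : R3 := (1, 0, 0)
/-- The coordinate direction `y`. -/
def vy : R3 := (0, 1, 0)
/-- The coordinate direction `t`. -/
def vt : R3 := (0, 0, 1)

/-- Partial (directional) derivative in the direction `e`. -/
def pd (e : R3) (u : R3 → ℝ) : R3 → ℝ := fun p => fderiv ℝ u p e

/-- `1`-periodicity in each of the three variables. -/
def Periodic3 (u : R3 → ℝ) : Prop :=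
  ∀ p : R3, u (p + vx) = u p ∧ u (p + vy) = u p ∧ u (p + vt) = u p

/-- The unit cube `[0,1]³`. -/
def cube : Set R3 := Set.Icc (0, 0, 0) (1, 1, 1)

/-- Zero mean over the unit cube. -/
def ZeroMean (u : R3 → ℝ) : Prop := ∫ p in cube, u p = 0

/-- The reduced Calabi–Yau equation
`(u_xx + 1)(u_yy + u_tt + u_t + 1) − u_xy² − u_xt² = e^F` on `ℝ³`. -/
def CYeq (F u : R3 → ℝ) : Prop :=
  ∀ p : R3,
    (pd vx (pd vx u) p + 1)
        * (pd vy (pd vy u) p + pd vt (pd vt u) p + pd vt u p + 1)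
      - (pd vy (pd vx u) p) ^ 2 - (pd vt (pd vx u) p) ^ 2 = Real.exp (F p)

/-- The Euclidean norm on `ℝ³ = ℝ × ℝ × ℝ`. -/
def enorm3 (h : R3) : ℝ := Real.sqrt (h.1 ^ 2 + h.2.1 ^ 2 + h.2.2 ^ 2)

/-!
Put `φ = oddPow r`, i.e. `φ(s) = |s|^(r-2) s`, so that `φ' = (r-1)|s|^(r-2)`, multiply the
equation by `φ(u)` and integrate over the torus. Integration by parts turns
`φ(u)(u_xx + u_yy + u_tt)` into `-φ'(u)|∇u|²`, the drift `φ(u) u_t` integrates to zero, and the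
Hessian terms `φ(u)(u_xx u_yy - u_xy²)`, `φ(u)(u_xx u_tt - u_xt²)`, `φ(u) u_xx u_t` turn into
cubic terms weighted by `φ'(u)/2`. Because `u_xx + 1 > 0` and the equation says that the
quadratic form `(Y, -u_xy, -u_xt; -u_xy, X, 0; -u_xt, 0, X)` (with `X = u_xx + 1`,
`Y = u_yy + u_tt + u_t + 1`) has positive determinant, these cubic terms are at most
`½ ∫ φ'(u)|∇u|²`. This leaves `(r-1) ∫ |u|^(r-2)|∇u|² ≤ 2 ∫ φ(u)(1 - e^F)`, and Jensen's
inequality bounds the right side by `2 B ‖u‖_r^(r-1)`.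
-/

open Filter Topology Set Function

lemma cube_eq_prod : cube = Icc (0 : ℝ) 1 ×ˢ Icc (0 : ℝ) 1 ×ˢ Icc (0 : ℝ) 1 := by
  rw [cube, Icc_prod_eq, Icc_prod_eq]

lemma volume_restrict_cube :
    volume.restrict cube =
      (volume.restrict (Icc (0 : ℝ) 1)).prod
        ((volume.restrict (Icc (0 : ℝ) 1)).prod (volume.restrict (Icc (0 : ℝ) 1))) := by
  rw [cube_eq_prod, Measure.volume_eq_prod, Measure.volume_eq_prod, ← Measure.prod_restrict,
    ← Measure.prod_restrict]

instance : IsProbabilityMeasure (volume.restrict cube) := by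
  rw [volume_restrict_cube]
  have : IsProbabilityMeasure (volume.restrict (Icc (0 : ℝ) 1)) :=
    ⟨by simp⟩
  infer_instance

lemma Continuous.integrableOn_cube {f : R3 → ℝ} (hf : Continuous f) : IntegrableOn f cube :=
  hf.continuousOn.integrableOn_compact isCompact_Icc

lemma integral_cube_eq_iterated {f : R3 → ℝ} (hf : Continuous f) :
    ∫ p in cube, f p = ∫ x in Icc 0 1, ∫ y in Icc 0 1, ∫ t in Icc 0 1, f (x, y, t) := by
  rw [volume_restrict_cube,
    integral_prod _ (by rw [← volume_restrict_cube]; exact hf.integrableOn_cube)]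
  congr 1 with x
  refine integral_prod _ ?_
  rw [Measure.prod_restrict]
  exact (hf.comp (Continuous.prodMk_right x)).continuousOn.integrableOn_compact
    (isCompact_Icc.prod isCompact_Icc)

lemma periodic3_iff {f : R3 → ℝ} :
    Periodic3 f ↔ ∀ x y t, f (x + 1, y, t) = f (x, y, t) ∧ f (x, y + 1, t) = f (x, y, t) ∧
      f (x, y, t + 1) = f (x, y, t) := by
  simp [Periodic3, vx, vy, vt, Prod.forall]

lemma integral_Icc_comp_add_right_of_periodic {g : ℝ → ℝ} (hg : Periodic g 1) (s : ℝ) :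
    ∫ a in Icc 0 1, g (a + s) = ∫ a in Icc 0 1, g a := by
  simp only [integral_Icc_eq_integral_Ioc, ← intervalIntegral.integral_of_le zero_le_one,
    intervalIntegral.integral_comp_add_right g s]
  simpa [add_comm] using hg.intervalIntegral_add_eq s 0

lemma integral_cube_comp_add_right {f : R3 → ℝ} (hf : Continuous f) (hper : Periodic3 f)
    (c : R3) : ∫ p in cube, f (p + c) = ∫ p in cube, f p := by
  obtain ⟨a, b, d⟩ := c
  rw [integral_cube_eq_iterated (by fun_prop), integral_cube_eq_iterated hf]
  have hper := periodic3_iff.1 hper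
  simp only [Prod.mk_add_mk]
  have ht : ∀ x y, ∫ t in Icc 0 1, f (x, y, t + d) = ∫ t in Icc 0 1, f (x, y, t) :=
    fun x y => integral_Icc_comp_add_right_of_periodic (g := fun t => f (x, y, t))
      (fun t => (hper x y t).2.2) d
  have hy : ∀ x, ∫ y in Icc 0 1, ∫ t in Icc 0 1, f (x, y + b, t) =
      ∫ y in Icc 0 1, ∫ t in Icc 0 1, f (x, y, t) := fun x =>
    integral_Icc_comp_add_right_of_periodic (g := fun y => ∫ t in Icc 0 1, f (x, y, t))
      (fun y => by simp only [(hper x y _).2.1]) b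
  simp only [ht, hy]
  exact integral_Icc_comp_add_right_of_periodic
    (g := fun x => ∫ y in Icc 0 1, ∫ t in Icc 0 1, f (x, y, t))
    (fun x => by simp only [(hper x _ _).1]) a

lemma Periodic3.comp {f : R3 → ℝ} (hf : Periodic3 f) (G : ℝ → ℝ) :
    Periodic3 fun p => G (f p) := fun p => by
  simp only [(hf p).1, (hf p).2.1, (hf p).2.2, and_self]

lemma Periodic3.comp₂ {f g : R3 → ℝ} (hf : Periodic3 f) (hg : Periodic3 g)
    (G : ℝ → ℝ → ℝ) : Periodic3 fun p => G (f p) (g p) := fun p => by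
  simp only [(hf p).1, (hf p).2.1, (hf p).2.2, (hg p).1, (hg p).2.1, (hg p).2.2, and_self]

lemma Periodic3.mul {f g : R3 → ℝ} (hf : Periodic3 f) (hg : Periodic3 g) :
    Periodic3 fun p => f p * g p :=
  hf.comp₂ hg (· * ·)

lemma Periodic3.comp_add_const {f : R3 → ℝ} (hf : Periodic3 f) (c : R3) :
    Periodic3 fun p => f (p + c) := fun p => by
  simp only [add_right_comm p _ c, (hf (p + c)).1, (hf (p + c)).2.1, (hf (p + c)).2.2, and_self]

lemma Periodic3.pd {f : R3 → ℝ} (hf : Periodic3 f) (e : R3) : Periodic3 (pd e f) := by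
  have hshift : ∀ c, (fun q => f (q + c)) = f → ∀ p,
      _root_.pd e f (p + c) = _root_.pd e f p := fun c hc p => by
    simp only [_root_.pd, ← fderiv_comp_add_right, hc]
  exact fun p => ⟨hshift vx (funext fun q => (hf q).1) p,
    hshift vy (funext fun q => (hf q).2.1) p, hshift vt (funext fun q => (hf q).2.2) p⟩

lemma Periodic3.exists_abs_le {f : R3 → ℝ} (hf : Periodic3 f) (hc : Continuous f) :
    ∃ C, ∀ p, |f p| ≤ C := by
  obtain ⟨C, hC⟩ := isCompact_Icc.exists_bound_of_continuousOn (s := cube) hc.continuousOn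
  refine ⟨C, fun ⟨x, y, t⟩ => ?_⟩
  have hper := periodic3_iff.1 hf
  have hfract : ∀ {g : ℝ → ℝ}, Periodic g 1 → ∀ a, g (Int.fract a) = g a := fun hg a => by
    simpa only [mul_one, Int.self_sub_floor] using hg.sub_int_mul_eq ⌊a⌋ (x := a)
  have hrep : f (Int.fract x, Int.fract y, Int.fract t) = f (x, y, t) := by
    rw [hfract (g := fun t' => f (_, _, t')) (fun t' => (hper _ _ t').2.2),
      hfract (g := fun y' => f (_, y', t)) (fun y' => (hper _ y' _).2.1),
      hfract (g := fun x' => f (x', y, t)) (fun x' => (hper x' _ _).1)]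
  rw [← hrep, ← Real.norm_eq_abs]
  refine hC _ ⟨?_, ?_⟩ <;>
    simp [Prod.le_def, Int.fract_nonneg, (Int.fract_lt_one _).le]

lemma ContDiff.contDiff_pd {m n : WithTop ℕ∞} {f : R3 → ℝ} (hf : ContDiff ℝ n f)
    (hmn : m + 1 ≤ n) (e : R3) : ContDiff ℝ m (pd e f) :=
  (hf.fderiv_right hmn).clm_apply contDiff_const

lemma ContDiff.continuous_pd {f : R3 → ℝ} (hf : ContDiff ℝ 1 f) (e : R3) :
    Continuous (pd e f) :=
  (hf.contDiff_pd (m := 0) le_rfl e).continuous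

lemma pd_mul {f g : R3 → ℝ} {p : R3} (hf : DifferentiableAt ℝ f p)
    (hg : DifferentiableAt ℝ g p) (e : R3) :
    pd e (fun q => f q * g q) p = pd e f p * g p + f p * pd e g p := by
  simp [pd, fderiv_fun_mul hf hg]
  ring

lemma pd_comp {G G' : ℝ → ℝ} {f : R3 → ℝ} {p : R3} (hG : HasDerivAt G (G' (f p)) (f p))
    (hf : DifferentiableAt ℝ f p) (e : R3) :
    pd e (fun q => G (f q)) p = G' (f p) * pd e f p := by
  have hcomp : HasFDerivAt (fun q => G (f q)) (G' (f p) • fderiv ℝ f p) p :=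
    hG.comp_hasFDerivAt p hf.hasFDerivAt
  simp [pd, hcomp.fderiv]

lemma pd_neg (v : R3) (f : R3 → ℝ) (p : R3) : pd (-v) f p = -pd v f p :=
  map_neg _ _

lemma pd_comm {f : R3 → ℝ} (hf : ContDiff ℝ 2 f) (e e' p : R3) :
    pd e (pd e' f) p = pd e' (pd e f) p := by
  have hd : Differentiable ℝ (fderiv ℝ f) :=
    (hf.fderiv_right (m := 1) (by norm_num)).differentiable one_ne_zero
  have hsecond : ∀ w w', pd w (pd w' f) p = fderiv ℝ (fderiv ℝ f) p w w' := fun w w' => by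
    change fderiv ℝ (fun q => fderiv ℝ f q w') p w = _
    simp [fderiv_clm_apply (hd p) (differentiableAt_const w')]
  rw [hsecond, hsecond]
  exact second_derivative_symmetric (fun q => (hf.differentiable two_ne_zero q).hasFDerivAt)
    (hd p).hasFDerivAt e e'

lemma contDiff_one_of_hasDerivAt {G G' : ℝ → ℝ} (hG : ∀ s, HasDerivAt G (G' s) s)
    (hG' : Continuous G') : ContDiff ℝ 1 G :=
  contDiff_one_iff_deriv.2 ⟨fun s => (hG s).differentiableAt, by
    rwa [funext fun s => (hG s).deriv]⟩

def diffQuot (v : R3) (h : ℝ) (f : R3 → ℝ) (p : R3) : ℝ := h⁻¹ * (f (p + h • v) - f p)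

section diffQuot

variable {f : R3 → ℝ} {v : R3} {h : ℝ}

lemma Continuous.diffQuot (hf : Continuous f) : Continuous (diffQuot v h f) := by
  unfold _root_.diffQuot; fun_prop

lemma Periodic3.diffQuot (hf : Periodic3 f) : Periodic3 (diffQuot v h f) :=
  (hf.comp_add_const _).comp₂ hf fun a b => h⁻¹ * (a - b)

lemma ContDiff.diffQuot {n : WithTop ℕ∞} (hf : ContDiff ℝ n f) :
    ContDiff ℝ n (diffQuot v h f) := by
  unfold _root_.diffQuot; fun_prop

lemma pd_diffQuot (hf : Differentiable ℝ f) (e p : R3) :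
    pd e (diffQuot v h f) p = diffQuot v h (pd e f) p := by
  have hshift : HasFDerivAt (fun q => f (q + h • v)) (fderiv ℝ f (p + h • v)) p :=
    (hf _).hasFDerivAt.comp p ((hasFDerivAt_id p).add_const _)
  change fderiv ℝ (fun q => h⁻¹ * (f (q + h • v) - f q)) p e = _
  simp [((hshift.fun_sub (hf p).hasFDerivAt).const_mul h⁻¹).fderiv, _root_.diffQuot, _root_.pd]

lemma hasDerivAt_comp_add_smul (hf : Differentiable ℝ f) (p : R3) (s : ℝ) :
    HasDerivAt (fun s => f (p + s • v)) (pd v f (p + s • v)) s :=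
  (hf _).hasFDerivAt.comp_hasDerivAt s
    (by simpa using ((hasDerivAt_id s).smul_const v).const_add p)

lemma abs_diffQuot_le (hf : Differentiable ℝ f) {M : ℝ} (hM : ∀ q, |pd v f q| ≤ M)
    (p : R3) : |diffQuot v h f p| ≤ M := by
  have hM0 : 0 ≤ M := (abs_nonneg _).trans (hM p)
  have hmvt := Convex.norm_image_sub_le_of_norm_hasDerivWithin_le (s := univ) (x := 0) (y := h)
    (fun s _ => (hasDerivAt_comp_add_smul hf p s).hasDerivWithinAt) (fun s _ => hM _)
    convex_univ trivial trivial
  simp only [zero_smul, add_zero, sub_zero, Real.norm_eq_abs] at hmvt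
  rw [_root_.diffQuot, abs_mul, abs_inv]
  rcases eq_or_ne h 0 with rfl | hh
  · simpa using hM0
  · rwa [inv_mul_le_iff₀ (abs_pos.2 hh), mul_comm]

lemma tendsto_diffQuot (hf : Differentiable ℝ f) (p : R3) :
    Tendsto (fun h => diffQuot v h f p) (𝓝[≠] 0) (𝓝 (pd v f p)) := by
  have hd := hasDerivAt_iff_tendsto_slope.1 (hasDerivAt_comp_add_smul hf p 0 (v := v))
  simp only [zero_smul, add_zero] at hd
  refine hd.congr fun h => ?_
  simp [slope_def_field, _root_.diffQuot, div_eq_inv_mul]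

end diffQuot

lemma integral_cube_add {f g : R3 → ℝ} (hf : Continuous f) (hg : Continuous g) :
    ∫ p in cube, (f p + g p) = (∫ p in cube, f p) + ∫ p in cube, g p :=
  integral_add hf.integrableOn_cube hg.integrableOn_cube

lemma integral_cube_sub {f g : R3 → ℝ} (hf : Continuous f) (hg : Continuous g) :
    ∫ p in cube, (f p - g p) = (∫ p in cube, f p) - ∫ p in cube, g p :=
  integral_sub hf.integrableOn_cube hg.integrableOn_cube

lemma integral_cube_mul_diffQuot {f g : R3 → ℝ} (hf : Continuous f) (hfper : Periodic3 f)
    (hg : Continuous g) (hgper : Periodic3 g) (v : R3) (h : ℝ) :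
    ∫ p in cube, g p * diffQuot v h f p = ∫ p in cube, diffQuot (-v) h g p * f p := by
  have hshift : ∫ p in cube, g p * f (p + h • v) = ∫ p in cube, g (p + -(h • v)) * f p := by
    rw [← integral_cube_comp_add_right (f := fun p => g (p + -(h • v)) * f p) (by fun_prop)
      ((hgper.comp_add_const _).mul hfper) (h • v)]
    simp
  calc ∫ p in cube, g p * diffQuot v h f p
      = h⁻¹ * ((∫ p in cube, g p * f (p + h • v)) - ∫ p in cube, g p * f p) := by
        rw [← integral_cube_sub (by fun_prop) (by fun_prop), ← integral_const_mul]
        simp only [diffQuot, mul_sub, mul_left_comm]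
    _ = h⁻¹ * ((∫ p in cube, g (p + -(h • v)) * f p) - ∫ p in cube, g p * f p) := by
        rw [hshift]
    _ = ∫ p in cube, diffQuot (-v) h g p * f p := by
        rw [← integral_cube_sub (by fun_prop) (by fun_prop), ← integral_const_mul]
        simp only [diffQuot, smul_neg, sub_mul, mul_sub, mul_assoc]

lemma tendsto_integral_cube_mul_diffQuot {f g : R3 → ℝ} (hg : IntegrableOn g cube)
    (hf : ContDiff ℝ 1 f) (hfper : Periodic3 f) (v : R3) :
    Tendsto (fun h => ∫ p in cube, g p * diffQuot v h f p) (𝓝[≠] 0)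
      (𝓝 (∫ p in cube, g p * pd v f p)) := by
  have hfd := hf.differentiable one_ne_zero
  obtain ⟨M, hM⟩ := (hfper.pd v).exists_abs_le (hf.continuous_pd v)
  refine tendsto_integral_filter_of_dominated_convergence (fun p => ‖g p‖ * M)
    (Eventually.of_forall fun h => ?_) (Eventually.of_forall fun h => ?_)
    (hg.norm.mul_const M) (Eventually.of_forall fun p => (tendsto_diffQuot hfd p).const_mul (g p))
  · exact hg.aestronglyMeasurable.mul hf.continuous.diffQuot.aestronglyMeasurable
  · refine Eventually.of_forall fun p => ?_
    rw [norm_mul, Real.norm_eq_abs (diffQuot v h f p)]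
    gcongr
    exact abs_diffQuot_le hfd hM p

lemma integral_cube_pd_eq_zero {f : R3 → ℝ} (hf : ContDiff ℝ 1 f) (hper : Periodic3 f)
    (v : R3) : ∫ p in cube, pd v f p = 0 := by
  have hlim := tendsto_integral_cube_mul_diffQuot (g := fun _ => 1) (integrable_const 1)
    hf hper v
  have hzero : ∀ h, ∫ p in cube, 1 * diffQuot v h f p = 0 := fun h => by
    rw [integral_cube_mul_diffQuot hf.continuous hper continuous_const
      (fun _ => ⟨rfl, rfl, rfl⟩) v h]
    simp [diffQuot]
  simp only [hzero] at hlim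
  simp only [one_mul] at hlim
  exact tendsto_nhds_unique hlim tendsto_const_nhds

lemma integral_cube_pd_mul {f g : R3 → ℝ} (hf : ContDiff ℝ 1 f) (hfper : Periodic3 f)
    (hg : ContDiff ℝ 1 g) (hgper : Periodic3 g) (v : R3) :
    ∫ p in cube, pd v f p * g p = -∫ p in cube, f p * pd v g p := by
  have h0 := integral_cube_pd_eq_zero (hf.mul hg) (hfper.mul hgper) v
  have := hf.continuous_pd v
  have := hg.continuous_pd v
  simp only [pd_mul (hf.differentiable one_ne_zero _) (hg.differentiable one_ne_zero _)] at h0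
  rw [integral_cube_add (by fun_prop) (by fun_prop)] at h0
  linarith

/-- For `C¹` data one cannot integrate by parts twice. Instead, a difference quotient in the
direction `v` is moved from `β` to `α` by translation invariance, the derivative in the direction
`e` is moved by one integration by parts, and then `h → 0`. -/
lemma integral_cube_pd_mul_pd_comm {α β : R3 → ℝ} (hα : ContDiff ℝ 1 α)
    (hαper : Periodic3 α) (hβ : ContDiff ℝ 1 β) (hβper : Periodic3 β) (e v : R3) :
    ∫ p in cube, pd e α p * pd v β p = ∫ p in cube, pd v α p * pd e β p := by
  have hdiscrete : ∀ h, ∫ p in cube, pd e α p * diffQuot v h β p =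
      -∫ p in cube, pd e β p * diffQuot (-v) h α p := fun h => by
    rw [integral_cube_mul_diffQuot hβ.continuous hβper (hα.continuous_pd e) (hαper.pd e)]
    simp only [← pd_diffQuot (hα.differentiable one_ne_zero)]
    rw [integral_cube_pd_mul hα.diffQuot hαper.diffQuot hβ hβper]
    simp only [mul_comm]
  have hlim := (tendsto_integral_cube_mul_diffQuot (hβ.continuous_pd e).integrableOn_cube
    hα hαper (-v)).neg
  simp only [← hdiscrete, pd_neg, mul_neg, integral_neg, neg_neg] at hlim
  rw [tendsto_nhds_unique (tendsto_integral_cube_mul_diffQuot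
    (hα.continuous_pd e).integrableOn_cube hβ hβper v) hlim]
  simp only [mul_comm]

section WeightedIdentities

variable {u : R3 → ℝ} {W W' : ℝ → ℝ}

lemma pd_comp_mul (hW : ∀ s, HasDerivAt W (W' s) s) (hu : Differentiable ℝ u) {g : R3 → ℝ}
    (hg : Differentiable ℝ g) (e p : R3) :
    pd e (fun q => W (u q) * g q) p = W' (u p) * pd e u p * g p + W (u p) * pd e g p := by
  rw [pd_mul (f := fun q => W (u q)) ((hW _).differentiableAt.comp p (hu p)) (hg p),
    pd_comp (hW _) (hu p)]

lemma integral_cube_comp_mul_pd_eq_zero (hu : ContDiff ℝ 1 u) (hper : Periodic3 u)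
    (hW : ∀ s, HasDerivAt W (W' s) s) (hW' : Continuous W') (v : R3) :
    ∫ p in cube, W' (u p) * pd v u p = 0 := by
  have h0 := integral_cube_pd_eq_zero ((contDiff_one_of_hasDerivAt hW hW').comp hu)
    (hper.comp W) v
  simpa only [Function.comp_def, pd_comp (hW _) (hu.differentiable one_ne_zero _)] using h0

lemma integral_cube_comp_mul_pd_pd (hu : ContDiff ℝ 2 u) (hper : Periodic3 u)
    (hW : ∀ s, HasDerivAt W (W' s) s) (hW' : Continuous W') (e : R3) :
    ∫ p in cube, W (u p) * pd e (pd e u) p = -∫ p in cube, W' (u p) * pd e u p ^ 2 := by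
  have hu1 : ContDiff ℝ 1 u := hu.of_le one_le_two
  have hibp := integral_cube_pd_mul ((contDiff_one_of_hasDerivAt hW hW').comp hu1)
    (hper.comp W) (hu.contDiff_pd (by norm_num) e) (hper.pd e) e
  simp only [Function.comp_def, pd_comp (hW _) (hu1.differentiable one_ne_zero _)] at hibp
  simp only [sq, ← mul_assoc]
  linarith

lemma two_mul_integral_cube_comp_mul_pd_pd_mul_pd (hu : ContDiff ℝ 2 u) (hper : Periodic3 u)
    (hW : ∀ s, HasDerivAt W (W' s) s) (hW' : Continuous W') (e v : R3) :
    2 * ∫ p in cube, W (u p) * (pd e (pd e u) p * pd v u p) =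
      -∫ p in cube, W' (u p) * (pd e u p ^ 2 * pd v u p) := by
  have hu1 : ContDiff ℝ 1 u := hu.of_le one_le_two
  have hue : ContDiff ℝ 1 (pd e u) := hu.contDiff_pd (by norm_num) e
  have huv : ContDiff ℝ 1 (pd v u) := hu.contDiff_pd (by norm_num) v
  have hWu : ContDiff ℝ 1 fun p => W (u p) := (contDiff_one_of_hasDerivAt hW hW').comp hu1
  have hWc : Continuous W := (contDiff_one_of_hasDerivAt hW hW').continuous
  have := hue.continuous_pd e
  have := hue.continuous_pd v
  have hud := hu1.differentiable one_ne_zero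
  have hued := hue.differentiable one_ne_zero
  have hF := integral_cube_pd_eq_zero (f := fun q => W (u q) * (pd v u q * pd e u q))
    (hWu.mul (huv.mul hue)) ((hper.comp W).mul ((hper.pd v).mul (hper.pd e))) e
  have hG := integral_cube_pd_eq_zero (f := fun q => W (u q) * (pd e u q * pd e u q))
    (hWu.mul (hue.mul hue)) ((hper.comp W).mul ((hper.pd e).mul (hper.pd e))) v
  have hFp : ∀ p, pd e (fun q => W (u q) * (pd v u q * pd e u q)) p =
      W' (u p) * (pd e u p ^ 2 * pd v u p) + W (u p) * (pd e (pd e u) p * pd v u p) +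
        W (u p) * (pd e u p * pd v (pd e u) p) := fun p => by
    rw [pd_comp_mul hW hud ((huv.differentiable one_ne_zero).fun_mul hued),
      pd_mul (huv.differentiable one_ne_zero p) (hued p), pd_comm hu e v]
    ring
  have hGp : ∀ p, pd v (fun q => W (u q) * (pd e u q * pd e u q)) p =
      W' (u p) * (pd e u p ^ 2 * pd v u p) + 2 * (W (u p) * (pd e u p * pd v (pd e u) p)) :=
    fun p => by
      rw [pd_comp_mul hW hud (hued.fun_mul hued), pd_mul (hued p) (hued p)]
      ring
  simp only [hFp] at hF
  simp only [hGp] at hG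
  rw [integral_cube_add (by fun_prop) (by fun_prop),
    integral_cube_add (by fun_prop) (by fun_prop)] at hF
  rw [integral_cube_add (by fun_prop) (by fun_prop), integral_const_mul] at hG
  linarith

lemma two_mul_integral_cube_comp_mul_hessian_minor (hu : ContDiff ℝ 2 u) (hper : Periodic3 u)
    (hW : ∀ s, HasDerivAt W (W' s) s) (hW' : Continuous W') (e v : R3) :
    2 * ∫ p in cube, W (u p) * (pd e (pd e u) p * pd v (pd v u) p - pd v (pd e u) p ^ 2) =
      ∫ p in cube, W' (u p) * (2 * pd e u p * pd v u p * pd v (pd e u) p -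
        pd e u p ^ 2 * pd v (pd v u) p - pd v u p ^ 2 * pd e (pd e u) p) := by
  have hu1 : ContDiff ℝ 1 u := hu.of_le one_le_two
  have hue : ContDiff ℝ 1 (pd e u) := hu.contDiff_pd (by norm_num) e
  have huv : ContDiff ℝ 1 (pd v u) := hu.contDiff_pd (by norm_num) v
  have hWu : ContDiff ℝ 1 fun p => W (u p) := (contDiff_one_of_hasDerivAt hW hW').comp hu1
  have hWc : Continuous W := (contDiff_one_of_hasDerivAt hW hW').continuous
  have hud := hu1.differentiable one_ne_zero
  have hswap₁ := integral_cube_pd_mul_pd_comm (hWu.mul hue) ((hper.comp W).mul (hper.pd e))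
    huv (hper.pd v) e v
  have hswap₂ := integral_cube_pd_mul_pd_comm (hWu.mul huv) ((hper.comp W).mul (hper.pd v))
    hue (hper.pd e) e v
  have := hue.continuous_pd e
  have := hue.continuous_pd v
  have := huv.continuous_pd e
  have := huv.continuous_pd v
  have := (hWu.mul hue).continuous_pd e
  have := (hWu.mul hue).continuous_pd v
  have := (hWu.mul huv).continuous_pd e
  have := (hWu.mul huv).continuous_pd v
  rw [← integral_const_mul, ← sub_eq_zero, ← integral_cube_sub (by fun_prop) (by fun_prop)]
  calc _ = ∫ p in cube,
        ((pd e (fun q => W (u q) * pd e u q) p * pd v (pd v u) p -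
          pd v (fun q => W (u q) * pd e u q) p * pd e (pd v u) p) -
        (pd e (fun q => W (u q) * pd v u q) p * pd v (pd e u) p -
          pd v (fun q => W (u q) * pd v u q) p * pd e (pd e u) p)) := by
        congr 1 with p
        simp only [pd_comp_mul hW hud (hue.differentiable one_ne_zero),
          pd_comp_mul hW hud (huv.differentiable one_ne_zero), pd_comm hu e v]
        ring
    _ = 0 := by
        rw [integral_cube_sub (by fun_prop) (by fun_prop),
          integral_cube_sub (by fun_prop) (by fun_prop),
          integral_cube_sub (by fun_prop) (by fun_prop), hswap₁, hswap₂, sub_self, sub_self,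
          sub_zero]

end WeightedIdentities

def oddPow (r s : ℝ) : ℝ := |s| ^ (r - 2) * s

section oddPow

variable {r : ℝ}

lemma continuous_oddPow (hr : 2 ≤ r) : Continuous (oddPow r) := by
  unfold oddPow; fun_prop (disch := linarith)

lemma hasDerivAt_oddPow (hr : 2 ≤ r) (s : ℝ) :
    HasDerivAt (oddPow r) ((r - 1) * |s| ^ (r - 2)) s := by
  have hne : ∀ y ≠ 0, HasDerivAt (oddPow r) ((r - 1) * |y| ^ (r - 2)) y := fun y hy => by
    have habs : HasDerivAt (oddPow r)
        ((SignType.sign y : ℝ) * (r - 2) * |y| ^ (r - 2 - 1) * y + |y| ^ (r - 2) * 1) y :=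
      ((hasDerivAt_abs hy).rpow_const (Or.inl (abs_ne_zero.2 hy))).mul (hasDerivAt_id' y)
    refine habs.congr_deriv ?_
    rw [Real.rpow_sub_one (abs_ne_zero.2 hy)]
    calc _ = (r - 2) * |y| ^ (r - 2) * ((SignType.sign y : ℝ) * y / |y|) + |y| ^ (r - 2) := by
          ring
      _ = _ := by rw [sign_mul_self, div_self (abs_ne_zero.2 hy)]; ring
  rcases eq_or_ne s 0 with rfl | hs
  · exact hasDerivAt_of_hasDerivAt_of_ne hne (continuous_oddPow hr).continuousAt
      (by fun_prop (disch := linarith))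
  · exact hne s hs

lemma hasDerivAt_abs_rpow_div (hr : 2 ≤ r) (s : ℝ) :
    HasDerivAt (fun s => |s| ^ r / r) (oddPow r s) s := by
  refine ((hasDerivAt_abs_rpow s (by linarith : 1 < r)).div_const r).congr_deriv ?_
  rw [oddPow]
  field_simp [(by linarith : r ≠ 0)]

lemma abs_oddPow (hr : 2 ≤ r) (s : ℝ) : |oddPow r s| = |s| ^ (r - 1) := by
  rcases eq_or_ne s 0 with rfl | hs
  · simp [oddPow, Real.zero_rpow (by linarith : r - 1 ≠ 0)]
  · rw [oddPow, abs_mul, abs_of_nonneg (by positivity), show r - 1 = (r - 2) + 1 by ring,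
      Real.rpow_add_one (abs_ne_zero.2 hs)]

end oddPow

lemma Continuous.pos_of_ne_zero_of_integral_pos {X : Type*} [TopologicalSpace X]
    [PreconnectedSpace X] [MeasurableSpace X] {μ : Measure X} {f : X → ℝ} (hf : Continuous f)
    (hne : ∀ x, f x ≠ 0) (hint : 0 < ∫ x, f x ∂μ) (x : X) : 0 < f x := by
  obtain ⟨y, hy⟩ : ∃ y, 0 < f y := by
    by_contra! h
    exact hint.not_ge (integral_nonpos h)
  by_contra! hx
  obtain ⟨z, hz⟩ := intermediate_value_univ x y hf ⟨hx, hy.le⟩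
  exact hne z hz

-- `X (Y x² + X (y² + t²) - 2x(ya + tb)) = (XY - a² - b²) x² + (ax - Xy)² + (bx - Xt)²`
lemma two_mul_le_of_det_nonneg {X Y a b x y t : ℝ} (hX : 0 < X)
    (hdet : 0 ≤ X * Y - a ^ 2 - b ^ 2) :
    2 * x * (y * a + t * b) ≤ Y * x ^ 2 + X * (y ^ 2 + t ^ 2) := by
  nlinarith [sq_nonneg (a * x - X * y), sq_nonneg (b * x - X * t), mul_nonneg hdet (sq_nonneg x)]

lemma integral_rpow_le_rpow_integral {α : Type*} [MeasurableSpace α] {μ : Measure α}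
    [IsProbabilityMeasure μ] {f : α → ℝ} (hf : 0 ≤ f) (hfi : Integrable f μ) {q : ℝ}
    (hq₀ : 0 ≤ q) (hq₁ : q ≤ 1) (hfqi : Integrable (fun x => f x ^ q) μ) :
    ∫ x, f x ^ q ∂μ ≤ (∫ x, f x ∂μ) ^ q :=
  (Real.concaveOn_rpow hq₀ hq₁).le_map_integral (Real.continuous_rpow_const hq₀).continuousOn
    isClosed_Ici (ae_of_all _ hf) hfi hfqi

lemma integral_cube_oddPow_mul_le {r B : ℝ} (hr : 2 ≤ r) {u g : R3 → ℝ} (hu : Continuous u)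
    (hg : Continuous g) (hgB : ∀ p, |g p| ≤ B) :
    ∫ p in cube, oddPow r (u p) * g p ≤ B * (∫ p in cube, |u p| ^ r) ^ ((r - 1) / r) := by
  have := continuous_oddPow hr
  have hr₀ : 0 ≤ r := by linarith
  have hq₀ : 0 ≤ (r - 1) / r := div_nonneg (by linarith) hr₀
  calc ∫ p in cube, oddPow r (u p) * g p ≤ ∫ p in cube, B * (|u p| ^ r) ^ ((r - 1) / r) := by
        refine integral_mono (Continuous.integrableOn_cube (by fun_prop))
          (Continuous.integrableOn_cube (by fun_prop (disch := assumption))) fun p => ?_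
        rw [← Real.rpow_mul (abs_nonneg _), mul_div_cancel₀ _ (by linarith : r ≠ 0),
          ← abs_oddPow hr, mul_comm B]
        exact (le_abs_self _).trans
          ((abs_mul _ _).trans_le (mul_le_mul_of_nonneg_left (hgB p) (abs_nonneg _)))
    _ ≤ B * (∫ p in cube, |u p| ^ r) ^ ((r - 1) / r) := by
        rw [integral_const_mul]
        gcongr
        · exact (abs_nonneg _).trans (hgB 0)
        · exact integral_rpow_le_rpow_integral (fun p => by positivity)
            (Continuous.integrableOn_cube (by fun_prop (disch := assumption))) hq₀
            (div_le_one_of_le₀ (by linarith) hr₀)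
            (Continuous.integrableOn_cube (by fun_prop (disch := assumption)))

section CalabiYau

variable {F u : R3 → ℝ}

lemma CYeq.pd_pd_add_one_pos (hsol : CYeq F u) (hu : ContDiff ℝ 2 u) (hper : Periodic3 u)
    (p : R3) : 0 < pd vx (pd vx u) p + 1 := by
  have hux : ContDiff ℝ 1 (pd vx u) := hu.contDiff_pd (by norm_num) vx
  have huxx := hux.continuous_pd vx
  refine Continuous.pos_of_ne_zero_of_integral_pos (μ := volume.restrict cube)
    (f := fun q => pd vx (pd vx u) q + 1) (by fun_prop)
    (fun q hq => ?_) ?_ p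
  · have h := hsol q
    rw [hq, zero_mul] at h
    nlinarith [Real.exp_pos (F q), sq_nonneg (pd vy (pd vx u) q), sq_nonneg (pd vt (pd vx u) q)]
  · rw [integral_cube_add huxx continuous_const, integral_cube_pd_eq_zero hux (hper.pd vx)]
    simp

lemma CYeq.two_mul_pd_le (hsol : CYeq F u) (hu : ContDiff ℝ 2 u) (hper : Periodic3 u)
    (p : R3) :
    2 * pd vx u p * (pd vy u p * pd vy (pd vx u) p + pd vt u p * pd vt (pd vx u) p) ≤
      (pd vy (pd vy u) p + pd vt (pd vt u) p + pd vt u p + 1) * pd vx u p ^ 2 +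
        (pd vx (pd vx u) p + 1) * (pd vy u p ^ 2 + pd vt u p ^ 2) :=
  two_mul_le_of_det_nonneg (hsol.pd_pd_add_one_pos hu hper p)
    (by rw [hsol p]; exact (Real.exp_pos _).le)

lemma CYeq.integral_cube_mul_exp_sub_one (hsol : CYeq F u) (hu : ContDiff ℝ 2 u) {w : R3 → ℝ}
    (hw : Continuous w) :
    ∫ p in cube, w p * (Real.exp (F p) - 1) =
      (∫ p in cube, w p * pd vx (pd vx u) p) + (∫ p in cube, w p * pd vy (pd vy u) p) +
      (∫ p in cube, w p * pd vt (pd vt u) p) + (∫ p in cube, w p * pd vt u p) +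
      (∫ p in cube, w p * (pd vx (pd vx u) p * pd vy (pd vy u) p - pd vy (pd vx u) p ^ 2)) +
      (∫ p in cube, w p * (pd vx (pd vx u) p * pd vt (pd vt u) p - pd vt (pd vx u) p ^ 2)) +
      ∫ p in cube, w p * (pd vx (pd vx u) p * pd vt u p) := by
  have hux : ContDiff ℝ 1 (pd vx u) := hu.contDiff_pd (by norm_num) vx
  have hut : ContDiff ℝ 1 (pd vt u) := hu.contDiff_pd (by norm_num) vt
  have := hux.continuous_pd vx
  have := hux.continuous_pd vy
  have := hux.continuous_pd vt
  have := (hu.contDiff_pd (m := 1) (by norm_num) vy).continuous_pd vy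
  have := hut.continuous_pd vt
  simp (disch := fun_prop) only [← integral_cube_add]
  congr 1 with p
  linear_combination -w p * hsol p

lemma CYeq.integral_cube_mul_hessian_terms_le (hsol : CYeq F u) (hu : ContDiff ℝ 2 u)
    (hper : Periodic3 u) {ψ : R3 → ℝ} (hψ : Continuous ψ) (hψ₀ : 0 ≤ ψ) :
    (∫ p in cube, ψ p * (2 * pd vx u p * pd vy u p * pd vy (pd vx u) p -
        pd vx u p ^ 2 * pd vy (pd vy u) p - pd vy u p ^ 2 * pd vx (pd vx u) p)) +
      (∫ p in cube, ψ p * (2 * pd vx u p * pd vt u p * pd vt (pd vx u) p -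
        pd vx u p ^ 2 * pd vt (pd vt u) p - pd vt u p ^ 2 * pd vx (pd vx u) p)) -
      (∫ p in cube, ψ p * (pd vx u p ^ 2 * pd vt u p)) ≤
    (∫ p in cube, ψ p * pd vx u p ^ 2) + (∫ p in cube, ψ p * pd vy u p ^ 2) +
      ∫ p in cube, ψ p * pd vt u p ^ 2 := by
  have hux : ContDiff ℝ 1 (pd vx u) := hu.contDiff_pd (by norm_num) vx
  have huy : ContDiff ℝ 1 (pd vy u) := hu.contDiff_pd (by norm_num) vy
  have hut : ContDiff ℝ 1 (pd vt u) := hu.contDiff_pd (by norm_num) vt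
  have := hux.continuous_pd vx
  have := hux.continuous_pd vy
  have := hux.continuous_pd vt
  have := huy.continuous_pd vy
  have := hut.continuous_pd vt
  simp (disch := fun_prop) only [← integral_cube_add, ← integral_cube_sub]
  refine integral_mono (Continuous.integrableOn_cube (by fun_prop))
    (Continuous.integrableOn_cube (by fun_prop)) fun p => ?_
  linear_combination mul_le_mul_of_nonneg_left (hsol.two_mul_pd_le hu hper p) (hψ₀ p)

lemma CYeq.integral_cube_rpow_mul_sq_pd_le (hsol : CYeq F u) (hu : ContDiff ℝ 2 u)
    (hper : Periodic3 u) {r : ℝ} (hr : 2 ≤ r) :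
    (r - 1) * ∫ p in cube, |u p| ^ (r - 2) * (pd vx u p ^ 2 + pd vy u p ^ 2 + pd vt u p ^ 2) ≤
      2 * ∫ p in cube, oddPow r (u p) * (1 - Real.exp (F p)) := by
  have hW := hasDerivAt_oddPow hr
  have hW' : Continuous fun s : ℝ => (r - 1) * |s| ^ (r - 2) := by fun_prop (disch := linarith)
  have hlap := integral_cube_comp_mul_pd_pd hu hper hW hW'
  have hhess := two_mul_integral_cube_comp_mul_hessian_minor hu hper hW hW' vx
  have hmix := two_mul_integral_cube_comp_mul_pd_pd_mul_pd hu hper hW hW' vx vt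
  have hdrift := integral_cube_comp_mul_pd_eq_zero (hu.of_le one_le_two) hper
    (hasDerivAt_abs_rpow_div hr) (continuous_oddPow hr) vt
  have hequation := hsol.integral_cube_mul_exp_sub_one hu
    ((continuous_oddPow hr).comp hu.continuous)
  have hhessian := hsol.integral_cube_mul_hessian_terms_le hu hper (hW'.comp hu.continuous)
    fun p => mul_nonneg (by linarith) (by positivity)
  have hux := (hu.contDiff_pd (m := 1) (by norm_num) vx).continuous
  have huy := (hu.contDiff_pd (m := 1) (by norm_num) vy).continuous
  have hut := (hu.contDiff_pd (m := 1) (by norm_num) vt).continuous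
  have hr₂ : 0 ≤ r - 2 := by linarith
  have hgrad : (r - 1) * ∫ p in cube, |u p| ^ (r - 2) *
      (pd vx u p ^ 2 + pd vy u p ^ 2 + pd vt u p ^ 2) =
      (∫ p in cube, (r - 1) * |u p| ^ (r - 2) * pd vx u p ^ 2) +
      (∫ p in cube, (r - 1) * |u p| ^ (r - 2) * pd vy u p ^ 2) +
      ∫ p in cube, (r - 1) * |u p| ^ (r - 2) * pd vt u p ^ 2 := by
    simp (disch := fun_prop (disch := assumption)) only [← integral_cube_add,
      ← integral_const_mul]
    congr 1 with p
    ring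
  have hsign : ∫ p in cube, oddPow r (u p) * (1 - Real.exp (F p)) =
      -∫ p in cube, oddPow r (u p) * (Real.exp (F p) - 1) := by
    rw [← integral_neg]
    congr 1 with p
    ring
  simp only [Function.comp_apply] at hequation hhessian
  linarith [hlap vx, hlap vy, hlap vt, hhess vy, hhess vt]

end CalabiYau

theorem stmt6_general (F u : R3 → ℝ) (hF : Continuous F)
    (hu : ContDiff ℝ 2 u) (huper : Periodic3 u)
    (hsol : CYeq F u) (r : ℝ) (hr : 2 ≤ r)
    (B : ℝ) (hB : ∀ p : R3, |1 + Real.exp (F p)| ≤ B) :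
    ∫ p in cube,
        |u p| ^ (r - 2) * ((pd vx u p) ^ 2 + (pd vy u p) ^ 2 + (pd vt u p) ^ 2)
      ≤ (1 / 4) * (∫ p in cube, |u p| ^ r)
        + (5 * r / 4) * B * (∫ p in cube, |u p| ^ r) ^ ((r - 1) / r) := by
  have hgrad : 0 ≤ ∫ p in cube,
      |u p| ^ (r - 2) * ((pd vx u p) ^ 2 + (pd vy u p) ^ 2 + (pd vt u p) ^ 2) :=
    integral_nonneg fun p => by positivity
  have hnorm : 0 ≤ ∫ p in cube, |u p| ^ r := integral_nonneg fun p => by positivity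
  have hB₀ : 0 ≤ B := (abs_nonneg _).trans (hB 0)
  have hbound : ∀ p, |1 - Real.exp (F p)| ≤ B := fun p => by
    refine (abs_le.2 ⟨?_, ?_⟩).trans (hB p) <;>
      linarith [Real.exp_pos (F p), le_abs_self (1 + Real.exp (F p))]
  have hweighted := integral_cube_oddPow_mul_le hr (hu.continuous) (by fun_prop) hbound
  calc _ ≤ (r - 1) * ∫ p in cube,
        |u p| ^ (r - 2) * ((pd vx u p) ^ 2 + (pd vy u p) ^ 2 + (pd vt u p) ^ 2) :=
        le_mul_of_one_le_left hgrad (by linarith)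
    _ ≤ 2 * (B * (∫ p in cube, |u p| ^ r) ^ ((r - 1) / r)) :=
        (hsol.integral_cube_rpow_mul_sq_pd_le hu huper hr).trans (by linarith)
    _ ≤ _ := by nlinarith [mul_nonneg hB₀ (Real.rpow_nonneg hnorm ((r - 1) / r))]

/-- The integral gradient estimate: for every `r ≥ 2` and every
uniform bound `B` on `|1 + e^F|`,
`∫ |u|^(r−2) |∇u|² ≤ (1/4) ‖u‖_{L^r}^r + (5r/4) B ‖u‖_{L^r}^(r−1)`. -/
theorem stmt6 (F u : R3 → ℝ) (hF : Continuous F) (hFper : Periodic3 F)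
    (hu : ContDiff ℝ 2 u) (huper : Periodic3 u) (humean : ZeroMean u)
    (hsol : CYeq F u) (r : ℝ) (hr : 2 ≤ r)
    (B : ℝ) (hB : ∀ p : R3, |1 + Real.exp (F p)| ≤ B) :
    ∫ p in cube,
        |u p| ^ (r - 2) * ((pd vx u p) ^ 2 + (pd vy u p) ^ 2 + (pd vt u p) ^ 2)
      ≤ (1 / 4) * (∫ p in cube, |u p| ^ r)
        + (5 * r / 4) * B * (∫ p in cube, |u p| ^ r) ^ ((r - 1) / r) :=
  stmt6_general F u hF hu huper hsol r hr B hB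

end
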